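/- If Γ is a crystallographic group with translation group T, then the translation subgroup of the crystallographic group Γ/Z(Γ) is T/Z(Γ), and the point group of Γ/Z(Γ) is isomorphic to the point group of Γ. -/

import Mathlib

noncomputable section

/-- Euclidean `n`-space. -/
abbrev E (n : ℕ) := EuclideanSpace ℝ (Fin n)

/-- An isometry `a + A` of `E n`, acting by `x ↦ a + A x`, with `A` a linear isometry
(an element of `O(n)`). -/
@[ext] structure Iso (n : ℕ) where
  a : E n
  A : E n ≃ₗᵢ[ℝ] E n

namespace Iso

variable {n : ℕ}

instance : Mul (Iso n) := ⟨fun x y => ⟨x.a + x.A y.a, y.A.trans x.A⟩⟩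
instance : One (Iso n) := ⟨⟨0, LinearIsometryEquiv.refl ℝ (E n)⟩⟩
instance : Inv (Iso n) := ⟨fun x => ⟨-(x.A.symm x.a), x.A.symm⟩⟩

@[simp] lemma mul_a (x y : Iso n) : (x * y).a = x.a + x.A y.a := rfl
@[simp] lemma mul_A (x y : Iso n) : (x * y).A = y.A.trans x.A := rfl
@[simp] lemma one_a : (1 : Iso n).a = 0 := rfl
@[simp] lemma one_A : (1 : Iso n).A = LinearIsometryEquiv.refl ℝ (E n) := rfl
@[simp] lemma inv_a (x : Iso n) : (x⁻¹).a = -(x.A.symm x.a) := rfl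
@[simp] lemma inv_A (x : Iso n) : (x⁻¹).A = x.A.symm := rfl

/-- The group of isometries of `E n`, with composition as multiplication. -/
instance : Group (Iso n) where
  mul_assoc x y z := by
    refine Iso.ext ?_ ?_
    · simp [add_assoc]
    · ext v; simp
  one_mul x := by refine Iso.ext ?_ ?_ <;> simp
  mul_one x := by refine Iso.ext ?_ ?_ <;> simp
  inv_mul_cancel x := by
    refine Iso.ext ?_ ?_
    · simp
    · ext v; simp

/-- The action of the isometry `a + A` on a point `x` of `E n`: `x ↦ a + A x`. -/
def act (g : Iso n) (x : E n) : E n := g.a + g.A x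

/-- The translation `a + I`. -/
def trans (a : E n) : Iso n := ⟨a, LinearIsometryEquiv.refl ℝ (E n)⟩

/-- `g` is a translation if its linear part is the identity. -/
def IsTranslation (g : Iso n) : Prop := g.A = LinearIsometryEquiv.refl ℝ (E n)

/-- The subgroup of all translations of `E n`. -/
def translations (n : ℕ) : Subgroup (Iso n) where
  carrier := {g | g.IsTranslation}
  mul_mem' := by
    intro x y hx hy
    simp only [Set.mem_setOf_eq, IsTranslation] at *
    rw [mul_A, hx, hy]; simp
  one_mem' := rfl
  inv_mem' := by
    intro x hx
    simp only [Set.mem_setOf_eq, IsTranslation] at *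
    rw [inv_A, hx]; rfl

/-- The set of translation vectors of a set `S` of isometries:
`{a : E n | a + I ∈ S}`. -/
def transVecs (S : Set (Iso n)) : Set (E n) := {a | Iso.trans a ∈ S}

/-- `Span(S)`: the real linear span of the translation vectors of `S`. -/
def spanS (S : Set (Iso n)) : Submodule ℝ (E n) :=
  Submodule.span ℝ (transVecs S)

/-- A crystallographic (space) group: a group of isometries of `E n` that acts
properly discontinuously (equivalently, is discrete) and cocompactly. -/
def IsCrystallographic (Γ : Subgroup (Iso n)) : Prop :=
  (∀ K : Set (E n), IsCompact K →
      {g : Iso n | g ∈ Γ ∧ ((Iso.act g '' K) ∩ K).Nonempty}.Finite) ∧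
  ∃ K : Set (E n), IsCompact K ∧ ∀ x : E n, ∃ g ∈ Γ, g.act x ∈ K

/-- `N` is a normal subgroup of `Γ`. -/
def IsNormalIn (N Γ : Subgroup (Iso n)) : Prop :=
  N ≤ Γ ∧ ∀ g ∈ Γ, ∀ x ∈ N, g * x * g⁻¹ ∈ N

/-- The completion of `S` in `Γ`:
`S̄ = {b+B ∈ Γ : b ∈ Span(S) and Span(S)ᗮ ⊆ Fix(B)}`. -/
def completion (Γ : Subgroup (Iso n)) (S : Set (Iso n)) : Set (Iso n) :=
  {g | g ∈ Γ ∧ g.a ∈ spanS S ∧ ∀ x ∈ (spanS S)ᗮ, g.A x = x}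

end Iso

/-- The isometry of `E n / V ≅ Vᗮ` induced by `g`, where `V = Span(N)`:
`V + x ↦ V + g.a + g.A x`, realized on `Vᗮ` via orthogonal projection. -/
noncomputable def quotAct {n : ℕ} (N : Subgroup (Iso n)) (g : Iso n) (x : E n) : E n :=
  (Submodule.orthogonalProjectionOnto (Iso.spanS (N : Set (Iso n)))ᗮ (g.act x) : E n)

/-- The center `Z(Γ)` of `Γ`, as a subgroup of `Iso n`. -/
def center' {n : ℕ} (Γ : Subgroup (Iso n)) : Subgroup (Iso n) :=
  Subgroup.centralizer (Γ : Set (Iso n)) ⊓ Γ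

/-! A central translation `x + I` commutes with every `g ∈ Γ`, which forces `g.A x = x`; hence
the linear part of every element of `Γ` fixes `V = Span(Z(Γ))` pointwise and, being orthogonal,
preserves `Vᗮ`. On `Vᗮ` the induced map is then `x ↦ P(g.a) + g.A x` with `P` the projection
onto `Vᗮ`, a translation exactly when `g.A` is the identity on `Vᗮ`, i.e. (as `E n = V ⊕ Vᗮ`)
everywhere; and for the same reason `g.A` is determined by its restriction to `Vᗮ`. -/

lemma LinearIsometry.mem_orthogonal_of_forall_eq_self {𝕜 F : Type*} [RCLike 𝕜]
    [NormedAddCommGroup F] [InnerProductSpace 𝕜 F] (f : F →ₗᵢ[𝕜] F) {V : Submodule 𝕜 F}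
    (hf : ∀ v ∈ V, f v = v) {x : F} (hx : x ∈ Vᗮ) : f x ∈ Vᗮ := by
  rw [Submodule.mem_orthogonal] at hx ⊢
  intro v hv
  rw [← hf v hv, f.inner_map_map]
  exact hx v hv

namespace Iso

variable {n : ℕ}

lemma A_apply_eq_self_of_commute_trans {g : Iso n} {x : E n} (h : Commute g (trans x)) :
    g.A x = x := by
  have ha : g.a + g.A x = x + g.a := by simpa [trans] using congrArg Iso.a h.eq
  linear_combination (norm := module) ha

lemma eqOn_spanS_of_forall_commute {g : Iso n} {S : Set (Iso n)} (hS : ∀ s ∈ S, Commute g s) :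
    Set.EqOn g.A id (spanS S) := by
  suffices spanS S ≤ LinearMap.eqLocus (g.A : E n →ₗ[ℝ] E n) LinearMap.id from fun _ hv => this hv
  exact Submodule.span_le.mpr fun x hx => A_apply_eq_self_of_commute_trans (hS _ hx)

lemma eqOn_spanS_center' {Γ : Subgroup (Iso n)} {g : Iso n} (hg : g ∈ Γ) :
    Set.EqOn g.A id (spanS (center' Γ : Set (Iso n))) :=
  eqOn_spanS_of_forall_commute fun _ hs => Subgroup.mem_centralizer_iff.mp hs.1 g hg

lemma A_mem_orthogonal_spanS_center' {Γ : Subgroup (Iso n)} {g : Iso n} (hg : g ∈ Γ) {x : E n}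
    (hx : x ∈ (spanS (center' Γ : Set (Iso n)))ᗮ) :
    g.A x ∈ (spanS (center' Γ : Set (Iso n)))ᗮ :=
  g.A.toLinearIsometry.mem_orthogonal_of_forall_eq_self (fun _ hv => eqOn_spanS_center' hg hv) hx

lemma A_eq_of_eqOn_orthogonal_spanS_center' {Γ : Subgroup (Iso n)} {g h : Iso n} (hg : g ∈ Γ)
    (hh : h ∈ Γ) (hgh : ∀ x ∈ (spanS (center' Γ : Set (Iso n)))ᗮ, g.A x = h.A x) : g.A = h.A :=
  LinearMap.ext_on_codisjoint (Submodule.isCompl_orthogonal _).codisjoint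
    ((eqOn_spanS_center' hg).trans (eqOn_spanS_center' hh).symm) hgh

end Iso

lemma quotAct_apply_of_mem_orthogonal {n : ℕ} (N : Subgroup (Iso n)) (g : Iso n) {x : E n}
    (hgx : g.A x ∈ (Iso.spanS (N : Set (Iso n)))ᗮ) :
    quotAct N g x =
      ((Iso.spanS (N : Set (Iso n)))ᗮ.orthogonalProjectionOnto g.a : E n) + g.A x := by
  rw [quotAct, Iso.act, map_add, Submodule.coe_add,
    Submodule.orthogonalProjectionOnto_mem_subspace_eq_self ⟨_, hgx⟩]

theorem stmt18_general {n : ℕ} (Γ : Subgroup (Iso n)) :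
    (∀ g ∈ Γ,
      ((∃ c : E n, ∀ x ∈ (Iso.spanS ((center' Γ : Subgroup (Iso n)) : Set (Iso n)))ᗮ,
          quotAct (center' Γ) g x = c + x) ↔ g.IsTranslation)) ∧
    (∀ g ∈ Γ, ∀ h ∈ Γ,
      (∀ x ∈ (Iso.spanS ((center' Γ : Subgroup (Iso n)) : Set (Iso n)))ᗮ,
          g.A x = h.A x) → g.A = h.A) := by
  set V := Iso.spanS ((center' Γ : Subgroup (Iso n)) : Set (Iso n))
  have hquot : ∀ g ∈ Γ, ∀ x ∈ Vᗮ,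
      quotAct (center' Γ) g x = (Vᗮ.orthogonalProjectionOnto g.a : E n) + g.A x :=
    fun g hg x hx => quotAct_apply_of_mem_orthogonal _ g (Iso.A_mem_orthogonal_spanS_center' hg hx)
  refine ⟨fun g hg => ⟨fun ⟨c, hc⟩ => ?_, fun htr => ?_⟩,
    fun g hg h hh => Iso.A_eq_of_eqOn_orthogonal_spanS_center' hg hh⟩
  swap
  · exact ⟨Vᗮ.orthogonalProjectionOnto g.a, fun x hx => by rw [hquot g hg x hx, htr]; rfl⟩
  have hc0 : (Vᗮ.orthogonalProjectionOnto g.a : E n) = c := by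
    simpa [hquot g hg 0 V.orthogonal.zero_mem] using hc 0 V.orthogonal.zero_mem
  refine Iso.A_eq_of_eqOn_orthogonal_spanS_center' hg Γ.one_mem fun x hx => ?_
  have hcx := hc x hx
  rw [hquot g hg x hx, hc0] at hcx
  exact add_left_cancel hcx

/-- If `Γ` is a crystallographic group with translation group `T`,
then the translation subgroup of the crystallographic group `Γ/Z(Γ)` (acting on
`E n / Span(Z(Γ))`) is `T/Z(Γ)` -- i.e. an element of `Γ` acts as a translation on the
quotient Euclidean space iff it is a translation -- and the point group of `Γ/Z(Γ)` is
isomorphic to the point group of `Γ` -- i.e. the restriction of linear parts to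
`Span(Z(Γ))ᗮ` is injective on the point group. -/
theorem stmt18 {n : ℕ} (Γ : Subgroup (Iso n)) (hΓ : Iso.IsCrystallographic Γ) :
    (∀ g ∈ Γ,
      ((∃ c : E n, ∀ x ∈ (Iso.spanS ((center' Γ : Subgroup (Iso n)) : Set (Iso n)))ᗮ,
          quotAct (center' Γ) g x = c + x) ↔ g.IsTranslation)) ∧
    (∀ g ∈ Γ, ∀ h ∈ Γ,
      (∀ x ∈ (Iso.spanS ((center' Γ : Subgroup (Iso n)) : Set (Iso n)))ᗮ,
          g.A x = h.A x) → g.A = h.A) :=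
  stmt18_general Γ
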